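/- Let n ≥ 2 be an integer and ε > 0. The symmetric function g : ℝ^n → ℝ defined by g(x_1, …, x_n) := Σ_{i=1}^{n} x_1 ⋯ x_{i−1} · f_G(x_i) · x_{i+1} ⋯ x_n satisfies |D_n g(x_1, …, x_{n+1})| ≤ ε |x_1| ⋯ |x_{n−1}| (|x_n| + |x_{n+1}|) for all x_1, …, x_{n+1} ∈ ℝ, but for every δ > 0 there is NO symmetric n-additive mapping a : ℝ^n → ℝ with |g(x_1, …, x_n) − a(x_1, …, x_n)| ≤ δ |x_1| ⋯ |x_n| for all x_1, …, x_n ∈ ℝ. -/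

import Mathlib

/-- Gajda's function `ζ`. -/
noncomputable def zeta (ε : ℝ) (x : ℝ) : ℝ :=
  if 1 ≤ x then ε / 6 else if -1 < x then ε / 6 * x else -(ε / 6)

/-- Gajda's function `f_G x = ∑ₖ 2⁻ᵏ ζ(2ᵏ x)`. -/
noncomputable def fG (ε : ℝ) (x : ℝ) : ℝ := ∑' k : ℕ, zeta ε (2 ^ k * x) / 2 ^ k

/-- The Cauchy difference operator `D_n` for a function of `n = m + 1` variables. -/
def Dop {S B : Type*} [AddCommSemigroup S] [AddCommGroup B] (m : ℕ)
    (g : (Fin (m + 1) → S) → B) (z : Fin (m + 2) → S) : B :=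
  g (Function.update (fun i : Fin (m + 1) => z i.castSucc) (Fin.last m)
      (z (Fin.castSucc (Fin.last m)) + z (Fin.last (m + 1))))
    - g (fun i : Fin (m + 1) => z i.castSucc)
    - g (Function.update (fun i : Fin (m + 1) => z i.castSucc) (Fin.last m)
      (z (Fin.last (m + 1))))

/-!
As `g` is affine in its last variable, `D_n g (x) = (f_G(xₙ + xₙ₊₁) - f_G(xₙ) - f_G(xₙ₊₁)) x₁ ⋯ xₙ₋₁`,
so the first claim is Gajda's estimate `|f_G(u + v) - f_G(u) - f_G(v)| ≤ ε (|u| + |v|)`.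
On the line `(1, …, 1, t)` we have `g = f_G(t) + C t`, so an `n`-additive `a` with
`|g - a| ≤ δ |x₁| ⋯ |xₙ|` would give an additive `ψ` with `|f_G(t) - ψ(t)| ≤ δ |t|`. But `ψ` is
`ℚ`-linear, while `f_G(2⁻ᴺ) ≥ N ε / 6 · 2⁻ᴺ` since `ζ` is linear on the first `N` terms.
-/

open Finset Function

lemma abs_tsum_le_of_abs_le_geometric {f : ℕ → ℝ} {c : ℝ} (hf : ∀ k, |f k| ≤ c / 2 / 2 ^ k) :
    |∑' k, f k| ≤ c :=
  tsum_of_norm_bounded (f := f) (hasSum_geometric_two' c) hf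

section Gajda

variable {ε : ℝ}

lemma abs_zeta_le (hε : 0 ≤ ε) (x : ℝ) : |zeta ε x| ≤ ε / 6 := by
  unfold zeta
  split_ifs with h1 h2
  · rw [abs_of_nonneg (by linarith)]
  · rw [abs_mul, abs_of_nonneg (by linarith : 0 ≤ ε / 6)]
    exact mul_le_of_le_one_right (by linarith) (abs_le.2 ⟨h2.le, (not_le.1 h1).le⟩)
  · rw [abs_neg, abs_of_nonneg (by linarith)]

lemma zeta_nonneg (hε : 0 ≤ ε) {x : ℝ} (hx : 0 ≤ x) : 0 ≤ zeta ε x := by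
  unfold zeta
  split_ifs <;> first | positivity | linarith

lemma zeta_of_abs_lt_one (ε : ℝ) {x : ℝ} (hx : |x| < 1) : zeta ε x = ε / 6 * x := by
  rw [abs_lt] at hx
  rw [zeta, if_neg (by linarith), if_pos hx.1]

lemma zeta_add_sub_sub_eq_zero {u v : ℝ} (h : |u| + |v| < 1) :
    zeta ε (u + v) - zeta ε u - zeta ε v = 0 := by
  rw [zeta_of_abs_lt_one ε ((abs_add_le u v).trans_lt h),
    zeta_of_abs_lt_one ε (by linarith [abs_nonneg v]),
    zeta_of_abs_lt_one ε (by linarith [abs_nonneg u])]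
  ring

lemma abs_zeta_div_two_pow_le (hε : 0 ≤ ε) (x : ℝ) (k : ℕ) :
    |zeta ε (2 ^ k * x) / 2 ^ k| ≤ ε / 3 / 2 / 2 ^ k := by
  rw [abs_div, abs_of_pos (by positivity : (0 : ℝ) < 2 ^ k)]
  gcongr
  linarith [abs_zeta_le hε (2 ^ k * x)]

lemma summable_zeta_div_two_pow (hε : 0 ≤ ε) (x : ℝ) :
    Summable fun k : ℕ => zeta ε (2 ^ k * x) / 2 ^ k :=
  (summable_geometric_two' (ε / 3)).of_norm_bounded (abs_zeta_div_two_pow_le hε x)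

lemma fG_add_sub_sub (hε : 0 ≤ ε) (u v : ℝ) :
    fG ε (u + v) - fG ε u - fG ε v =
      ∑' k : ℕ, (zeta ε (2 ^ k * u + 2 ^ k * v) - zeta ε (2 ^ k * u) - zeta ε (2 ^ k * v)) / 2 ^ k := by
  rw [fG, fG, fG, ← (summable_zeta_div_two_pow hε _).tsum_sub (summable_zeta_div_two_pow hε _),
    ← ((summable_zeta_div_two_pow hε _).sub (summable_zeta_div_two_pow hε _)).tsum_sub
      (summable_zeta_div_two_pow hε _)]
  congr 1 with k
  ring_nf

/-- The `k`-th term of the Cauchy difference vanishes while `2ᵏ (|u| + |v|) < 1`, where `ζ` is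
linear, and is at most `ε / 2ᵏ⁺¹` afterwards; the first `k` with `2ᵏ (|u| + |v|) ≥ 1` then gives
the bound. -/
theorem abs_fG_add_sub_sub_le (hε : 0 ≤ ε) (u v : ℝ) :
    |fG ε (u + v) - fG ε u - fG ε v| ≤ ε * (|u| + |v|) := by
  rw [fG_add_sub_sub hε]
  set d : ℕ → ℝ := fun k =>
    (zeta ε (2 ^ k * u + 2 ^ k * v) - zeta ε (2 ^ k * u) - zeta ε (2 ^ k * v)) / 2 ^ k
  have hd_le : ∀ k, |d k| ≤ ε / 2 / 2 ^ k := fun k => by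
    simp only [d]
    rw [abs_div, abs_of_pos (by positivity : (0 : ℝ) < 2 ^ k)]
    gcongr
    have := abs_zeta_le hε (2 ^ k * u + 2 ^ k * v)
    have := abs_zeta_le hε (2 ^ k * u)
    have := abs_zeta_le hε (2 ^ k * v)
    calc _ ≤ |zeta ε (2 ^ k * u + 2 ^ k * v)| + |zeta ε (2 ^ k * u)| + |zeta ε (2 ^ k * v)| :=
          (abs_sub _ _).trans (add_le_add_left (abs_sub _ _) _)
      _ ≤ ε / 2 := by linarith
  have hd_zero : ∀ k, 2 ^ k * (|u| + |v|) < 1 → d k = 0 := fun k hk => by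
    simp only [d]
    rw [zeta_add_sub_sub_eq_zero (by simpa [abs_mul, mul_add] using hk), zero_div]
  by_cases hex : ∃ N, 1 ≤ 2 ^ N * (|u| + |v|)
  · classical
    set N := Nat.find hex
    have hshift : ∑' k, d k = ∑' k, d (k + N) := by
      rw [← ((summable_geometric_two' ε).of_norm_bounded hd_le).sum_add_tsum_nat_add N,
        sum_eq_zero fun k hk => hd_zero k (not_le.1 (Nat.find_min hex (mem_range.1 hk))),
        zero_add]
    calc |∑' k, d k| = |∑' k, d (k + N)| := by rw [hshift]
      _ ≤ ε / 2 ^ N := abs_tsum_le_of_abs_le_geometric fun k =>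
          (hd_le (k + N)).trans_eq (by rw [pow_add]; field_simp)
      _ ≤ ε * (|u| + |v|) := by
          rw [div_le_iff₀ (by positivity)]
          nlinarith [Nat.find_spec hex]
  · simp only [not_exists, not_le] at hex
    rw [tsum_congr fun k => hd_zero k (hex k), tsum_zero, abs_zero]
    positivity

lemma le_fG_inv_two_pow (hε : 0 ≤ ε) (N : ℕ) :
    N * (ε / 6) * (2 ^ N)⁻¹ ≤ fG ε (2 ^ N)⁻¹ := by
  have hlinear : ∀ k ∈ range N, zeta ε (2 ^ k * (2 ^ N)⁻¹) / 2 ^ k = ε / 6 * (2 ^ N)⁻¹ :=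
    fun k hk => by
      have : |(2 : ℝ) ^ k * (2 ^ N)⁻¹| < 1 := by
        rw [abs_of_pos (by positivity), mul_inv_lt_iff₀ (by positivity), one_mul]
        exact pow_lt_pow_right₀ one_lt_two (mem_range.1 hk)
      rw [zeta_of_abs_lt_one ε this]
      field_simp
  calc (N : ℝ) * (ε / 6) * (2 ^ N)⁻¹ = ∑ k ∈ range N, zeta ε (2 ^ k * (2 ^ N)⁻¹) / 2 ^ k := by
        rw [sum_congr rfl hlinear, sum_const, card_range, nsmul_eq_mul, mul_assoc]
    _ ≤ fG ε (2 ^ N)⁻¹ := (summable_zeta_div_two_pow hε _).sum_le_tsum _ fun k _ =>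
        div_nonneg (zeta_nonneg hε (by positivity)) (by positivity)

theorem not_exists_addMonoidHom_abs_fG_sub_le (hε : 0 < ε) (δ : ℝ) :
    ¬ ∃ ψ : ℝ →+ ℝ, ∀ t, |fG ε t - ψ t| ≤ δ * |t| := by
  rintro ⟨ψ, hψ⟩
  obtain ⟨N, hN⟩ := exists_nat_gt ((δ + ψ 1) * 6 / ε)
  set t : ℝ := (2 ^ N)⁻¹
  have ht : 0 < t := by positivity
  have hψt : ψ t = ψ 1 * t := by
    simpa [t, smul_eq_mul, mul_comm] using map_inv_natCast_smul ψ ℝ ℝ (2 ^ N) 1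
  have hclose : fG ε t - ψ t ≤ δ * t := by
    simpa [abs_of_pos ht] using (abs_le.1 (hψ t)).2
  have hlower := le_fG_inv_two_pow hε.le N
  rw [div_lt_iff₀ hε] at hN
  nlinarith

end Gajda

section LeibnizSum

variable {ι R : Type*} [Fintype ι] [DecidableEq ι]

/-- The paper's `g` for `f = f_G`; named after the product rule `d(x₁ ⋯ xₙ) = ∑ᵢ x₁ ⋯ dxᵢ ⋯ xₙ`. -/
def leibnizSum [CommSemiring R] (f : R → R) (x : ι → R) : R :=
  ∑ i, f (x i) * ∏ j ∈ univ.erase i, x j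

lemma leibnizSum_update [CommSemiring R] (f : R → R) (x : ι → R) (i : ι) (t : R) :
    leibnizSum f (update x i t) = f t * ∏ j ∈ univ.erase i, x j +
      t * ∑ k ∈ univ.erase i, f (x k) * ∏ j ∈ (univ.erase k).erase i, x j := by
  have hx : ∀ j ∈ univ.erase i, update x i t j = x j := fun j hj =>
    update_of_ne (ne_of_mem_erase hj) _ _
  rw [leibnizSum, ← add_sum_erase _ _ (mem_univ i), update_self, prod_congr rfl hx, mul_sum]
  congr 1
  refine sum_congr rfl fun k hk => ?_
  have hik : i ∈ univ.erase k := mem_erase.2 ⟨(ne_of_mem_erase hk).symm, mem_univ i⟩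
  rw [hx k hk, ← mul_prod_erase _ _ hik, update_self,
    prod_congr rfl fun j hj => hx j (mem_erase.2 ⟨ne_of_mem_erase hj, mem_univ j⟩)]
  ring

lemma prod_erase_last {M : Type*} [CommMonoid M] {n : ℕ} (f : Fin (n + 1) → M) :
    ∏ j ∈ univ.erase (Fin.last n), f j = ∏ i : Fin n, f i.castSucc := by
  rw [← compl_singleton, ← Fin.image_castSucc, prod_image (Fin.castSucc_injective n).injOn]

lemma Dop_leibnizSum [CommRing R] (m : ℕ) (f : R → R) (z : Fin (m + 2) → R) :
    Dop m (leibnizSum f) z =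
      (f (z (Fin.last m).castSucc + z (Fin.last (m + 1))) - f (z (Fin.last m).castSucc)
        - f (z (Fin.last (m + 1)))) * ∏ i : Fin m, z i.castSucc.castSucc := by
  set x : Fin (m + 1) → R := fun i => z i.castSucc
  have hx := leibnizSum_update f x (Fin.last m) (x (Fin.last m))
  rw [update_eq_self] at hx
  rw [Dop, leibnizSum_update, leibnizSum_update, hx, prod_erase_last]
  ring

end LeibnizSum

/-- **Second example (case `r = 1`).** For `n = m + 2 ≥ 2`, the symmetric function
`g(x₁, …, x_n) = ∑ᵢ x₁ ⋯ x_{i-1} f_G(xᵢ) x_{i+1} ⋯ x_n` satisfies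
`|D_n g (x₁, …, x_{n+1})| ≤ ε |x₁| ⋯ |x_{n-1}| (|x_n| + |x_{n+1}|)`, but for every `δ > 0`
there is no symmetric `n`-additive `a` with `|g x - a x| ≤ δ |x₁| ⋯ |x_n|` for all `x`. -/
theorem stmt9 (m : ℕ) (ε : ℝ) (hε : 0 < ε)
    (g : (Fin (m + 2) → ℝ) → ℝ)
    (hg : ∀ x : Fin (m + 2) → ℝ,
      g x = ∑ i, fG ε (x i) * ∏ j ∈ Finset.univ.erase i, x j) :
    (∀ z : Fin (m + 3) → ℝ,
      |Dop (m + 1) g z| ≤ ε * (∏ i : Fin (m + 1), |z i.castSucc.castSucc|) *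
        (|z (Fin.castSucc (Fin.last (m + 1)))| + |z (Fin.last (m + 2))|)) ∧
    (∀ δ : ℝ, 0 < δ →
      ¬ ∃ a : (Fin (m + 2) → ℝ) → ℝ,
        (∀ (x : Fin (m + 2) → ℝ) (σ : Equiv.Perm (Fin (m + 2))), a (x ∘ σ) = a x) ∧
        (∀ (x : Fin (m + 2) → ℝ) (i : Fin (m + 2)) (u v : ℝ),
          a (Function.update x i (u + v))
            = a (Function.update x i u) + a (Function.update x i v)) ∧
        (∀ x : Fin (m + 2) → ℝ, |g x - a x| ≤ δ * ∏ i, |x i|)) := by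
  obtain rfl : g = leibnizSum (fG ε) := funext hg
  refine ⟨fun z => ?_, fun δ _ ⟨a, _, ha_add, ha_close⟩ => ?_⟩
  · rw [Dop_leibnizSum, abs_mul, ← abs_prod, mul_right_comm]
    gcongr
    exact abs_fG_add_sub_sub_le hε.le _ _
  · set L := Fin.last (m + 1)
    set C := ∑ _k ∈ univ.erase L, fG ε 1
    refine not_exists_addMonoidHom_abs_fG_sub_le hε δ
      ⟨AddMonoidHom.mk' (fun t => a (update 1 L t) - C * t) fun u v => by
        simp only [ha_add]; ring, fun t => ?_⟩
    have := ha_close (update 1 L t)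
    rw [← abs_prod, prod_update_of_mem (mem_univ L)] at this
    simp only [leibnizSum_update, Pi.one_apply, prod_const_one, mul_one] at this
    convert this using 2
    simp only [AddMonoidHom.mk'_apply, C]
    ring
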